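/- Let g be a Lie algebra and let ∇_i = ∂_i + 𝒜_i be covariant derivative operators (𝒜_i : ℝ^D → g smooth) and Φ_i : ℝ^D → g smooth functions, i = 1,...,D. The coupled Yang-Mills-with-scalars equations Σ_{i,j} η^{ij}[∇_i,[∇_j,∇_k]] = Σ_{i,j} η^{ij}[[∇_k,Φ_i],Φ_j] and Σ_{i,j} η^{ij}[∇_i,[∇_j,Φ_k]] = Σ_{i,j} η^{ij}[Φ_i,[Φ_j,Φ_k]] are invariant under the infinitesimal gauge transformation 𝒜_i ↦ 𝒜_i + ε(∂_i u + [𝒜_i, u]), Φ_i ↦ Φ_i + ε[Φ_i, u], to first order in ε, for any smooth u : ℝ^D → g. -/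
import Mathlib

/- STATEMENT 11: the coupled Yang-Mills-with-scalars equations
`Σ η^{ij}[∇_i,[∇_j,∇_k]] = Σ η^{ij}[[∇_k,Φ_i],Φ_j]` and
`Σ η^{ij}[∇_i,[∇_j,Φ_k]] = Σ η^{ij}[Φ_i,[Φ_j,Φ_k]]` are invariant to first
order in `ε` (working over `R` with `ε² = 0`) under the infinitesimal gauge
transformation `𝒜_i ↦ 𝒜_i + ε(∂_i u + [𝒜_i, u])`, `Φ_i ↦ Φ_i + ε[Φ_i, u]`. -/

/-- covariant derivative `[∇_i, x] = ∂_i x + [𝒜_i, x]` -/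
def gaugeCov {R A : Type*} [CommRing R] [LieRing A] [LieAlgebra R A] {D : ℕ}
    (der : Fin D → (A →ₗ[R] A)) (𝒜 : Fin D → A) (i : Fin D) (x : A) : A :=
  der i x + ⁅𝒜 i, x⁆

/-- curvature `[∇_i, ∇_j] = ∂_i 𝒜_j - ∂_j 𝒜_i + [𝒜_i, 𝒜_j]` -/
def gaugeCurv {R A : Type*} [CommRing R] [LieRing A] [LieAlgebra R A] {D : ℕ}
    (der : Fin D → (A →ₗ[R] A)) (𝒜 : Fin D → A) (i j : Fin D) : A :=
  der i (𝒜 j) - der j (𝒜 i) + ⁅𝒜 i, 𝒜 j⁆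

/-- the Yang-Mills equation `Σ η^{ij}[∇_i,[∇_j,∇_k]] = Σ η^{ij}[[∇_k,Φ_i],Φ_j]` -/
def YMeq1 {R A : Type*} [CommRing R] [LieRing A] [LieAlgebra R A] {D : ℕ}
    (η : Fin D → Fin D → R) (der : Fin D → (A →ₗ[R] A))
    (𝒜 Φ : Fin D → A) : Prop :=
  ∀ k : Fin D,
    (∑ i, ∑ j, η i j • gaugeCov der 𝒜 i (gaugeCurv der 𝒜 j k))
      = ∑ i, ∑ j, η i j • ⁅gaugeCov der 𝒜 k (Φ i), Φ j⁆

/-- the scalar-field equation `Σ η^{ij}[∇_i,[∇_j,Φ_k]] = Σ η^{ij}[Φ_i,[Φ_j,Φ_k]]` -/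
def YMeq2 {R A : Type*} [CommRing R] [LieRing A] [LieAlgebra R A] {D : ℕ}
    (η : Fin D → Fin D → R) (der : Fin D → (A →ₗ[R] A))
    (𝒜 Φ : Fin D → A) : Prop :=
  ∀ k : Fin D,
    (∑ i, ∑ j, η i j • gaugeCov der 𝒜 i (gaugeCov der 𝒜 j (Φ k)))
      = ∑ i, ∑ j, η i j • ⁅Φ i, ⁅Φ j, Φ k⁆⁆

/-- auxiliary Jacobi identity -/
lemma stmt11.jac3 {A : Type*} [LieRing A] (u X Y : A) :
    ⁅⁅X, u⁆, Y⁆ + ⁅X, ⁅Y, u⁆⁆ = ⁅⁅X, Y⁆, u⁆ := by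
  rw [← lie_skew ⁅X, u⁆ Y, lie_lie]
  abel

/-- brackets of first-order-drifted elements drift to first order -/
lemma stmt11.drift_lie {R A : Type*} [CommRing R] [LieRing A] [LieAlgebra R A]
    (ε : R) (hε : ε * ε = 0) (u X Y : A) :
    ⁅X + ε • ⁅X, u⁆, Y + ε • ⁅Y, u⁆⁆ = ⁅X, Y⁆ + ε • ⁅⁅X, Y⁆, u⁆ := by
  simp only [add_lie, lie_add, smul_lie, lie_smul, smul_smul, hε, zero_smul, add_zero,
    smul_add]
  rw [← stmt11.jac3 u X Y, smul_add]
  abel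

/-- the covariant derivative of a drifted element drifts to first order -/
lemma stmt11.cov_drift {R A : Type*} [CommRing R] [LieRing A] [LieAlgebra R A] {D : ℕ}
    (ε : R) (hε : ε * ε = 0) (der : Fin D → (A →ₗ[R] A))
    (hLeib : ∀ i : Fin D, ∀ x y : A, der i ⁅x, y⁆ = ⁅der i x, y⁆ + ⁅x, der i y⁆)
    (𝒜 : Fin D → A) (u : A) (i : Fin D) (x : A) :
    gaugeCov der (fun i => 𝒜 i + ε • (der i u + ⁅𝒜 i, u⁆)) i (x + ε • ⁅x, u⁆)
      = gaugeCov der 𝒜 i x + ε • ⁅gaugeCov der 𝒜 i x, u⁆ := by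
  simp only [gaugeCov, map_add, map_smul, hLeib i, add_lie, lie_add, smul_lie, lie_smul,
    smul_smul, hε, zero_smul, add_zero, smul_add]
  rw [← stmt11.jac3 u (𝒜 i) x, ← lie_skew (der i u) x]
  simp only [smul_add, smul_neg]
  abel

/-- the curvature of the drifted connection drifts to first order -/
lemma stmt11.curv_drift {R A : Type*} [CommRing R] [LieRing A] [LieAlgebra R A] {D : ℕ}
    (ε : R) (hε : ε * ε = 0) (der : Fin D → (A →ₗ[R] A))
    (hLeib : ∀ i : Fin D, ∀ x y : A, der i ⁅x, y⁆ = ⁅der i x, y⁆ + ⁅x, der i y⁆)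
    (hcomm : ∀ i j : Fin D, ∀ x : A, der i (der j x) = der j (der i x))
    (𝒜 : Fin D → A) (u : A) (j k : Fin D) :
    gaugeCurv der (fun i => 𝒜 i + ε • (der i u + ⁅𝒜 i, u⁆)) j k
      = gaugeCurv der 𝒜 j k + ε • ⁅gaugeCurv der 𝒜 j k, u⁆ := by
  simp only [gaugeCurv, map_add, map_smul, hLeib j, hLeib k, add_lie, lie_add, smul_lie,
    lie_smul, smul_smul, hε, zero_smul, add_zero, smul_add]
  rw [← stmt11.jac3 u (𝒜 j) (𝒜 k), ← lie_skew (der j u) (𝒜 k), hcomm j k u]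
  simp only [smul_add, smul_neg, smul_sub, sub_lie, add_lie, smul_lie, neg_smul, neg_lie]
  abel

/-- bracketing with `u` commutes with finite sums -/
lemma stmt11.sum_lie' {A : Type*} [LieRing A] {ι : Type*} (s : Finset ι) (f : ι → A)
    (u : A) : ⁅∑ i ∈ s, f i, u⁆ = ∑ i ∈ s, ⁅f i, u⁆ :=
  map_sum (AddMonoidHom.mk' (fun x => ⁅x, u⁆) fun a b => add_lie a b u) f s

/-- summing drifted elements drifts the sum to first order -/
lemma stmt11.sum_drift {R A : Type*} [CommRing R] [LieRing A] [LieAlgebra R A] {D : ℕ}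
    (ε : R) (u : A) (η : Fin D → Fin D → R) (f : Fin D → Fin D → A) :
    (∑ i, ∑ j, η i j • (f i j + ε • ⁅f i j, u⁆))
      = (∑ i, ∑ j, η i j • f i j) + ε • ⁅∑ i, ∑ j, η i j • f i j, u⁆ := by
  simp only [smul_add, Finset.sum_add_distrib, stmt11.sum_lie', Finset.smul_sum, smul_lie,
    smul_comm ε]

theorem stmt11 {R A : Type*} [CommRing R] [LieRing A] [LieAlgebra R A] {D : ℕ}
    (ε : R) (hε : ε * ε = 0)
    (η : Fin D → Fin D → R) (hη : ∀ i j, η i j = η j i)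
    (der : Fin D → (A →ₗ[R] A))
    (hLeib : ∀ i : Fin D, ∀ x y : A, der i ⁅x, y⁆ = ⁅der i x, y⁆ + ⁅x, der i y⁆)
    (hcomm : ∀ i j : Fin D, ∀ x : A, der i (der j x) = der j (der i x))
    (𝒜 Φ : Fin D → A) (u : A)
    (h1 : YMeq1 η der 𝒜 Φ) (h2 : YMeq2 η der 𝒜 Φ) :
    YMeq1 η der (fun i => 𝒜 i + ε • (der i u + ⁅𝒜 i, u⁆))
        (fun i => Φ i + ε • ⁅Φ i, u⁆)
    ∧ YMeq2 η der (fun i => 𝒜 i + ε • (der i u + ⁅𝒜 i, u⁆))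
        (fun i => Φ i + ε • ⁅Φ i, u⁆) := by
  constructor
  · intro k
    have hL : ∀ i j : Fin D,
        gaugeCov der (fun i => 𝒜 i + ε • (der i u + ⁅𝒜 i, u⁆)) i
            (gaugeCurv der (fun i => 𝒜 i + ε • (der i u + ⁅𝒜 i, u⁆)) j k)
          = gaugeCov der 𝒜 i (gaugeCurv der 𝒜 j k)
            + ε • ⁅gaugeCov der 𝒜 i (gaugeCurv der 𝒜 j k), u⁆ := by
      intro i j
      rw [stmt11.curv_drift ε hε der hLeib hcomm 𝒜 u j k,
        stmt11.cov_drift ε hε der hLeib 𝒜 u i]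
    have hR : ∀ i j : Fin D,
        ⁅gaugeCov der (fun i => 𝒜 i + ε • (der i u + ⁅𝒜 i, u⁆)) k (Φ i + ε • ⁅Φ i, u⁆),
            Φ j + ε • ⁅Φ j, u⁆⁆
          = ⁅gaugeCov der 𝒜 k (Φ i), Φ j⁆ + ε • ⁅⁅gaugeCov der 𝒜 k (Φ i), Φ j⁆, u⁆ := by
      intro i j
      rw [stmt11.cov_drift ε hε der hLeib 𝒜 u k, stmt11.drift_lie ε hε]
    simp only [hL, hR, stmt11.sum_drift ε u η, h1 k]
  · intro k
    have hL : ∀ i j : Fin D,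
        gaugeCov der (fun i => 𝒜 i + ε • (der i u + ⁅𝒜 i, u⁆)) i
            (gaugeCov der (fun i => 𝒜 i + ε • (der i u + ⁅𝒜 i, u⁆)) j (Φ k + ε • ⁅Φ k, u⁆))
          = gaugeCov der 𝒜 i (gaugeCov der 𝒜 j (Φ k))
            + ε • ⁅gaugeCov der 𝒜 i (gaugeCov der 𝒜 j (Φ k)), u⁆ := by
      intro i j
      rw [stmt11.cov_drift ε hε der hLeib 𝒜 u j, stmt11.cov_drift ε hε der hLeib 𝒜 u i]
    have hR : ∀ i j : Fin D,
        ⁅Φ i + ε • ⁅Φ i, u⁆, ⁅Φ j + ε • ⁅Φ j, u⁆, Φ k + ε • ⁅Φ k, u⁆⁆⁆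
          = ⁅Φ i, ⁅Φ j, Φ k⁆⁆ + ε • ⁅⁅Φ i, ⁅Φ j, Φ k⁆⁆, u⁆ := by
      intro i j
      rw [stmt11.drift_lie ε hε u (Φ j) (Φ k), stmt11.drift_lie ε hε]
    simp only [hL, hR, stmt11.sum_drift ε u η, h2 k]
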